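/- Let σ be a finite signature, A and B valued σ-structures, and m ≥ 1 an integer. Then there exists a fractional homomorphism from LP^m(A) to B if and only if (A,B) has an m-ary symmetric fractional polymorphism. -/

import Mathlib

open scoped BigOperators Classical

namespace PVCSP

/-! ## Valued structures -/

/-- The value `Val(I,A,h)` of an assignment `h : I → A`, where the input structure is
given by weights `vI` and the template structure by costs `vA` (in `ℚ ∪ {∞}`). -/
def Val {σ : Type} [Fintype σ] (ar : σ → ℕ) {I A : Type} [Fintype I]
    (vI : ∀ R : σ, (Fin (ar R) → I) → ℚ)
    (vA : ∀ R : σ, (Fin (ar R) → A) → WithTop ℚ) (h : I → A) : WithTop ℚ :=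
  ∑ R : σ, ∑ v : Fin (ar R) → I, (vI R v : WithTop ℚ) * vA R (fun i => h (v i))

/-- `Opt(I,A)`: the minimum value over all assignments. -/
def Opt {σ : Type} [Fintype σ] (ar : σ → ℕ) {I A : Type} [Fintype I] [DecidableEq I]
    [Fintype A]
    (vI : ∀ R : σ, (Fin (ar R) → I) → ℚ)
    (vA : ∀ R : σ, (Fin (ar R) → A) → WithTop ℚ) : WithTop ℚ :=
  (Finset.univ : Finset (I → A)).inf fun h => Val ar vI vA h

/-- Non-negativity of an input (finite-valued) structure. -/
def NNeg {σ : Type} (ar : σ → ℕ) {I : Type}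
    (vI : ∀ R : σ, (Fin (ar R) → I) → ℚ) : Prop :=
  ∀ R v, 0 ≤ vI R v

/-- A fractional homomorphism from `A` to `B`. -/
def IsFracHom {σ : Type} [Fintype σ] (ar : σ → ℕ) {A B : Type}
    [Fintype A] [DecidableEq A] [Fintype B]
    (vA : ∀ R : σ, (Fin (ar R) → A) → WithTop ℚ)
    (vB : ∀ R : σ, (Fin (ar R) → B) → WithTop ℚ)
    (μ : (A → B) → ℚ) : Prop :=
  (∀ f, 0 ≤ μ f) ∧ (∑ f : A → B, μ f = 1) ∧
    ∀ (R : σ) (a : Fin (ar R) → A),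
      ∑ f : A → B, (μ f : WithTop ℚ) * vB R (fun i => f (a i)) ≤ vA R a

/-- A symmetric `n`-ary operation. -/
def IsSymmetricOp {A B : Type} {n : ℕ} (f : (Fin n → A) → B) : Prop :=
  ∀ (ρ : Equiv.Perm (Fin n)) (x : Fin n → A), f (fun i => x (ρ i)) = f x

/-- An `n`-ary fractional polymorphism of the pair `(A,B)`. -/
def IsFracPoly {σ : Type} [Fintype σ] (ar : σ → ℕ) {A B : Type}
    [Fintype A] [DecidableEq A] [Fintype B]
    (vA : ∀ R : σ, (Fin (ar R) → A) → WithTop ℚ)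
    (vB : ∀ R : σ, (Fin (ar R) → B) → WithTop ℚ)
    (n : ℕ) (ω : ((Fin n → A) → B) → ℚ) : Prop :=
  (∀ f, 0 ≤ ω f) ∧ (∑ f : (Fin n → A) → B, ω f = 1) ∧
    ∀ (R : σ) (a : Fin n → (Fin (ar R) → A)),
      ∑ f : (Fin n → A) → B, (ω f : WithTop ℚ) * vB R (fun j => f (fun i => a i j))
        ≤ ((((n : ℚ)⁻¹ : ℚ)) : WithTop ℚ) * ∑ i : Fin n, vA R (a i)

/-- A dual fractional homomorphism from `I` to `J` (both non-negative finite-valued). -/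
def IsDualFracHom {σ : Type} [Fintype σ] (ar : σ → ℕ) {I J : Type}
    [Fintype I] [DecidableEq I] [Fintype J] [DecidableEq J]
    (vI : ∀ R : σ, (Fin (ar R) → I) → ℚ)
    (vJ : ∀ R : σ, (Fin (ar R) → J) → ℚ)
    (η : (I → J) → ℚ) : Prop :=
  (∀ f, 0 ≤ η f) ∧ (∑ f : I → J, η f = 1) ∧
    ∀ (R : σ) (u : Fin (ar R) → J),
      ∑ f : I → J, η f *
          ∑ v ∈ Finset.univ.filter (fun v : Fin (ar R) → I => (fun i => f (v i)) = u), vI R v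
        ≤ vJ R u

/-! ## Linear programming relaxations -/

/-- Canonical embedding of `ℚ ∪ {∞}` into the extended reals. -/
noncomputable def toE (x : WithTop ℚ) : EReal :=
  x.recTopCoe ⊤ (fun q => ((q : ℝ) : EReal))

/-- The objective value of an LP solution `pc`. -/
def objVal {σ : Type} [Fintype σ] (ar : σ → ℕ) {I A : Type} [Fintype I] [Fintype A]
    (vI : ∀ R : σ, (Fin (ar R) → I) → ℚ)
    (vA : ∀ R : σ, (Fin (ar R) → A) → WithTop ℚ)
    (pc : ∀ R : σ, (Fin (ar R) → I) → (Fin (ar R) → A) → ℚ) : WithTop ℚ :=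
  ∑ R : σ, ∑ v : Fin (ar R) → I, ∑ a : Fin (ar R) → A,
    (pc R v a : WithTop ℚ) * ((vI R v : WithTop ℚ) * vA R a)

/-- Feasibility for the basic linear programming relaxation `BLP(I,A)`. -/
def BLPFeas {σ : Type} [Fintype σ] (ar : σ → ℕ) {I A : Type} [Fintype I] [Fintype A]
    [DecidableEq A]
    (vI : ∀ R : σ, (Fin (ar R) → I) → ℚ)
    (vA : ∀ R : σ, (Fin (ar R) → A) → WithTop ℚ)
    (pv : I → A → ℚ)
    (pc : ∀ R : σ, (Fin (ar R) → I) → (Fin (ar R) → A) → ℚ) : Prop :=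
  (∀ R v a, 0 < vI R v → 0 ≤ pc R v a) ∧
  (∀ u : I, ∑ a : A, pv u a = 1) ∧
  (∀ R v, 0 < vI R v → ∀ (i : Fin (ar R)) (a : A),
      pv (v i) a = ∑ t ∈ Finset.univ.filter (fun t : Fin (ar R) → A => t i = a), pc R v t) ∧
  (∀ R v, 0 < vI R v → ∀ t : Fin (ar R) → A, vA R t = ⊤ → pc R v t = 0)

/-- Feasibility for the Sherali–Adams relaxation `SA¹(I,A)`. -/
def SA1Feas {σ : Type} [Fintype σ] (ar : σ → ℕ) {I A : Type} [Fintype I] [Fintype A]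
    [DecidableEq A]
    (vI : ∀ R : σ, (Fin (ar R) → I) → ℚ)
    (vA : ∀ R : σ, (Fin (ar R) → A) → WithTop ℚ)
    (pv : I → A → ℚ)
    (pc : ∀ R : σ, (Fin (ar R) → I) → (Fin (ar R) → A) → ℚ) : Prop :=
  BLPFeas ar vI vA pv pc ∧
  (∀ R v, 0 < vI R v → ∀ t : Fin (ar R) → A,
      (∃ i j, v i = v j ∧ t i ≠ t j) → pc R v t = 0)

/-- The optimal value `Opt^BLP(I,A)` (equal to `⊤` if the program is infeasible). -/
noncomputable def OptBLP {σ : Type} [Fintype σ] (ar : σ → ℕ) {I A : Type}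
    [Fintype I] [Fintype A] [DecidableEq A]
    (vI : ∀ R : σ, (Fin (ar R) → I) → ℚ)
    (vA : ∀ R : σ, (Fin (ar R) → A) → WithTop ℚ) : EReal :=
  sInf { x : EReal | ∃ pv pc, BLPFeas ar vI vA pv pc ∧ x = toE (objVal ar vI vA pc) }

/-- The optimal value `Opt^{SA¹}(I,A)` (equal to `⊤` if the program is infeasible). -/
noncomputable def OptSA1 {σ : Type} [Fintype σ] (ar : σ → ℕ) {I A : Type}
    [Fintype I] [Fintype A] [DecidableEq A]
    (vI : ∀ R : σ, (Fin (ar R) → I) → ℚ)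
    (vA : ∀ R : σ, (Fin (ar R) → A) → WithTop ℚ) : EReal :=
  sInf { x : EReal | ∃ pv pc, SA1Feas ar vI vA pv pc ∧ x = toE (objVal ar vI vA pc) }

/-- The structure `LP^m(A)` on the universe of `m`-element multisets over `A`. -/
def lpPow {σ : Type} [Fintype σ] (ar : σ → ℕ) {A : Type} [Fintype A] [DecidableEq A]
    (m : ℕ) (vA : ∀ R : σ, (Fin (ar R) → A) → WithTop ℚ) :
    ∀ R : σ, (Fin (ar R) → Sym A m) → WithTop ℚ :=
  fun R s =>
    ((((m : ℚ)⁻¹ : ℚ)) : WithTop ℚ) *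
      ((Finset.univ.filter (fun t : Fin (ar R) → (Fin m → A) =>
          ∀ j, Multiset.map (t j) Finset.univ.val = Sym.toMultiset (s j))).inf
        (fun t => ∑ i : Fin m, vA R (fun j => t j i)))

/-! ## The graph of an input structure and iterated degrees -/

/-- Potential constraint vertices of the graph `G(I)`. -/
abbrev CVert (σ : Type) (ar : σ → ℕ) (I : Type) := Σ R : σ, (Fin (ar R) → I)

/-- The label of the edge between variable `u` and constraint `c`: the set of
coordinates of `c` at which `u` occurs. -/
def edgeLab {σ : Type} {ar : σ → ℕ} {I : Type} [DecidableEq I]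
    (u : I) (c : CVert σ ar I) : Finset ℕ :=
  (Finset.univ.filter (fun i : Fin (ar c.1) => c.2 i = u)).image Fin.val

/-- The type of `k`-th iterated degrees over signature `σ`. -/
def Deg (σ : Type) : ℕ → Type
  | 0 => Option (σ × ℚ)
  | k+1 => Multiset (Finset ℕ × Deg σ k)

/-- The `k`-th iterated degree of a vertex of `G(I)` (a variable or a constraint). -/
def degV {σ : Type} [Fintype σ] (ar : σ → ℕ) {I : Type} [Fintype I] [DecidableEq I]
    (vI : ∀ R : σ, (Fin (ar R) → I) → ℚ) :
    (k : ℕ) → (I ⊕ CVert σ ar I) → Deg σ k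
  | 0, Sum.inl _ => (none : Option (σ × ℚ))
  | 0, Sum.inr c => some (c.1, vI c.1 c.2)
  | k+1, Sum.inl u =>
      ((Finset.univ.filter
          (fun c : CVert σ ar I => 0 < vI c.1 c.2 ∧ ∃ i, c.2 i = u)).val).map
        (fun c => (edgeLab u c, degV ar vI k (Sum.inr c)))
  | k+1, Sum.inr c =>
      ((Finset.univ.filter (fun u : I => ∃ i, c.2 i = u)).val).map
        (fun u => (edgeLab u c, degV ar vI k (Sum.inl u)))

/-- The full iterated degree type. -/
def IterDeg (σ : Type) : Type := ∀ k : ℕ, Deg σ k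

/-- The iterated degree `δ(x)` of a vertex. -/
def itdeg {σ : Type} [Fintype σ] (ar : σ → ℕ) {I : Type} [Fintype I] [DecidableEq I]
    (vI : ∀ R : σ, (Fin (ar R) → I) → ℚ) (x : I ⊕ CVert σ ar I) : IterDeg σ :=
  fun k => degV ar vI k x

/-- The iterated degree sequence `δ(I)` (a multiset over all vertices of `G(I)`). -/
def degSeq {σ : Type} [Fintype σ] (ar : σ → ℕ) {I : Type} [Fintype I] [DecidableEq I]
    (vI : ∀ R : σ, (Fin (ar R) → I) → ℚ) : Multiset (IterDeg σ) :=
  (Finset.univ.val.map (fun u : I => itdeg ar vI (Sum.inl u))) +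
  ((Finset.univ.filter (fun c : CVert σ ar I => 0 < vI c.1 c.2)).val.map
      (fun c => itdeg ar vI (Sum.inr c)))

/-- Adjacency in the graph `G(I)`. -/
def Adj {σ : Type} (ar : σ → ℕ) {I : Type}
    (vI : ∀ R : σ, (Fin (ar R) → I) → ℚ) :
    (I ⊕ CVert σ ar I) → (I ⊕ CVert σ ar I) → Prop
  | Sum.inl u, Sum.inr c => 0 < vI c.1 c.2 ∧ ∃ i, c.2 i = u
  | Sum.inr c, Sum.inl u => 0 < vI c.1 c.2 ∧ ∃ i, c.2 i = u
  | _, _ => False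

/-- Actual vertices of `G(I)`: all variables and the positive-weight constraints. -/
def IsVert {σ : Type} (ar : σ → ℕ) {I : Type}
    (vI : ∀ R : σ, (Fin (ar R) → I) → ℚ) : (I ⊕ CVert σ ar I) → Prop
  | Sum.inl _ => True
  | Sum.inr c => 0 < vI c.1 c.2

/-- Connectedness of the input structure `I` (i.e. of its graph `G(I)`). -/
def Conn {σ : Type} (ar : σ → ℕ) {I : Type}
    (vI : ∀ R : σ, (Fin (ar R) → I) → ℚ) : Prop :=
  Nonempty I ∧ ∀ x y, IsVert ar vI x → IsVert ar vI y →
    Relation.ReflTransGen (Adj ar vI) x y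

/-- Weak congruence: `|J| ⬝ δ(I) = |I| ⬝ δ(J)`. -/
def WeakCongr {σ : Type} [Fintype σ] (ar : σ → ℕ) {I J : Type}
    [Fintype I] [DecidableEq I] [Fintype J] [DecidableEq J]
    (vI : ∀ R : σ, (Fin (ar R) → I) → ℚ)
    (vJ : ∀ R : σ, (Fin (ar R) → J) → ℚ) : Prop :=
  (Fintype.card J) • degSeq ar vI = (Fintype.card I) • degSeq ar vJ

/-- Membership of a variable in the connected component of the variable `x₀`. -/
def InComp {σ : Type} (ar : σ → ℕ) {I : Type}
    (vI : ∀ R : σ, (Fin (ar R) → I) → ℚ) (x₀ u : I) : Prop :=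
  Relation.ReflTransGen (Adj ar vI) (Sum.inl x₀) (Sum.inl u)

/-! A symmetric operation `(Fin m → A) → B` is the same thing as a map `Sym A m → B` composed
with the multiset map `toSym`, since two tuples with the same multiset of entries differ by a
permutation. So pushing forward along `g ↦ g ∘ toSym`, resp. along `f ↦ f ∘ L` for a section
`L` of `toSym`, turns fractional homomorphisms `LP^m(A) → B` into symmetric fractional
polymorphisms and back: the cost of a tuple of multisets in `LP^m(A)` is the average cost of the
rows of an optimal arrangement of those multisets into columns, which is exactly the right-hand
side of the polymorphism inequality. -/

-- `WithTop ℚ` is not a semiring (`(-1) * ⊤ = ⊤`): distributivity needs nonnegative weights.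
lemma coe_sum_mul_of_nonneg {ι : Type*} (s : Finset ι) {c : ι → ℚ}
    (hc : ∀ i ∈ s, 0 ≤ c i) (x : WithTop ℚ) :
    ((∑ i ∈ s, c i : ℚ) : WithTop ℚ) * x = ∑ i ∈ s, (c i : WithTop ℚ) * x := by
  induction x with
  | top =>
    by_cases hzero : ∀ i ∈ s, c i = 0
    · rw [Finset.sum_eq_zero hzero, Finset.sum_eq_zero fun i hi => by rw [hzero i hi]; simp]
      simp
    · push Not at hzero
      obtain ⟨i, hi, hci⟩ := hzero
      have hpos : 0 < ∑ i ∈ s, c i := Finset.sum_pos' hc ⟨i, hi, (hc i hi).lt_of_ne' hci⟩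
      rw [WithTop.mul_top (by exact_mod_cast hpos.ne'), eq_comm, WithTop.sum_eq_top]
      exact ⟨i, hi, WithTop.mul_top (by exact_mod_cast hci)⟩
  | coe r => norm_cast; exact Finset.sum_mul s c r

lemma coe_mul_le_coe_mul {q : ℚ} (hq : 0 ≤ q) {x y : WithTop ℚ} (h : x ≤ y) :
    (q : WithTop ℚ) * x ≤ q * y := by
  induction y with
  | top =>
    rcases hq.eq_or_lt with rfl | hq
    · simp
    · rw [WithTop.mul_top (by exact_mod_cast hq.ne')]
      exact le_top
  | coe r =>
    lift x to ℚ using ne_top_of_le_ne_top WithTop.coe_ne_top h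
    norm_cast at h ⊢
    exact mul_le_mul_of_nonneg_left h hq

section PushWeight

variable {G F : Type*} [Fintype G]

noncomputable def pushWeight (Φ : G → F) (μ : G → ℚ) (f : F) : ℚ :=
  ∑ g with Φ g = f, μ g

variable {Φ : G → F} {μ : G → ℚ}

lemma pushWeight_nonneg (hμ : ∀ g, 0 ≤ μ g) (f : F) : 0 ≤ pushWeight Φ μ f :=
  Finset.sum_nonneg fun g _ => hμ g

lemma sum_pushWeight [Fintype F] : ∑ f, pushWeight Φ μ f = ∑ g, μ g :=
  Finset.sum_fiberwise _ _ _

lemma sum_pushWeight_mul [Fintype F] (hμ : ∀ g, 0 ≤ μ g) (X : F → WithTop ℚ) :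
    ∑ f, (pushWeight Φ μ f : WithTop ℚ) * X f = ∑ g, (μ g : WithTop ℚ) * X (Φ g) :=
  calc ∑ f, (pushWeight Φ μ f : WithTop ℚ) * X f
      = ∑ f, ∑ g with Φ g = f, (μ g : WithTop ℚ) * X (Φ g) := by
        refine Finset.sum_congr rfl fun f _ => ?_
        rw [pushWeight, coe_sum_mul_of_nonneg _ fun g _ => hμ g]
        exact Finset.sum_congr rfl fun g hg => by rw [(Finset.mem_filter.1 hg).2]
    _ = ∑ g, (μ g : WithTop ℚ) * X (Φ g) := Finset.sum_fiberwise _ _ _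

lemma exists_eq_of_pushWeight_pos {f : F} (h : 0 < pushWeight Φ μ f) : ∃ g, Φ g = f := by
  obtain ⟨g, hg, -⟩ := Finset.exists_ne_zero_of_sum_ne_zero h.ne'
  exact ⟨g, (Finset.mem_filter.1 hg).2⟩

end PushWeight

section ToSym

variable {A : Type} {m : ℕ}

def toSym (x : Fin m → A) : Sym A m :=
  Sym.mk (Multiset.map x Finset.univ.val) (by simp)

lemma toSym_surjective : Function.Surjective (toSym : (Fin m → A) → Sym A m) := by
  rintro ⟨s, hs⟩
  obtain rfl : s.toList.length = m := by rw [Multiset.length_toList, hs]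
  refine ⟨s.toList.get, Sym.coe_inj.1 ?_⟩
  simp only [toSym, Sym.coe_mk, Fin.univ_val_map, List.ofFn_get, Multiset.coe_toList]

lemma toSym_comp_perm (x : Fin m → A) (ρ : Equiv.Perm (Fin m)) :
    toSym (fun i => x (ρ i)) = toSym x := by
  refine Sym.coe_inj.1 ?_
  simp only [toSym, Sym.coe_mk]
  rw [show (fun i => x (ρ i)) = x ∘ ρ from rfl, ← Multiset.map_map x ρ,
    Multiset.map_univ_val_equiv ρ]

lemma exists_perm_comp_eq_of_map_eq {ι : Type*} [Fintype ι] {x y : ι → A}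
    (h : Multiset.map x Finset.univ.val = Multiset.map y Finset.univ.val) :
    ∃ ρ : Equiv.Perm ι, x ∘ ρ = y := by
  classical
  have hfiber : ∀ a, Fintype.card {i // y i = a} = Fintype.card {i // x i = a} := fun a => by
    have := congrArg (Multiset.count a) h
    simp only [Multiset.count_map] at this
    simpa [Fintype.card_subtype, Finset.card_def, Finset.filter_val, eq_comm] using this.symm
  exact ⟨Equiv.ofFiberEquiv fun a => Fintype.equivOfCardEq (hfiber a),
    funext (Equiv.ofFiberEquiv_map _)⟩

lemma IsSymmetricOp.apply_eq_of_toSym_eq {B : Type} {f : (Fin m → A) → B}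
    (hf : IsSymmetricOp f) {x y : Fin m → A} (h : toSym x = toSym y) : f x = f y := by
  have hmap : Multiset.map x Finset.univ.val = Multiset.map y Finset.univ.val :=
    congrArg Sym.toMultiset h
  obtain ⟨ρ, rfl⟩ := exists_perm_comp_eq_of_map_eq hmap
  exact (hf ρ x).symm

lemma isSymmetricOp_comp_toSym {B : Type} (g : Sym A m → B) : IsSymmetricOp (g ∘ toSym) :=
  fun ρ x => congrArg g (toSym_comp_perm x ρ)

end ToSym

section LpPow

variable {σ : Type} [Fintype σ] {ar : σ → ℕ} {A : Type} [Fintype A] [DecidableEq A] {m : ℕ}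
  (vA : ∀ R : σ, (Fin (ar R) → A) → WithTop ℚ)

lemma lpPow_toSym_le (R : σ) (t : Fin (ar R) → Fin m → A) :
    lpPow ar m vA R (fun j => toSym (t j))
      ≤ ((((m : ℚ)⁻¹ : ℚ)) : WithTop ℚ) * ∑ i : Fin m, vA R (fun j => t j i) :=
  coe_mul_le_coe_mul (by positivity) <|
    Finset.inf_le (Finset.mem_filter.2 ⟨Finset.mem_univ t, fun _ => rfl⟩)

lemma exists_lpPow_eq (R : σ) (s : Fin (ar R) → Sym A m) :
    ∃ t : Fin (ar R) → Fin m → A, (∀ j, toSym (t j) = s j) ∧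
      lpPow ar m vA R s
        = ((((m : ℚ)⁻¹ : ℚ)) : WithTop ℚ) * ∑ i : Fin m, vA R (fun j => t j i) := by
  have hne : (Finset.univ.filter fun t : Fin (ar R) → Fin m → A =>
      ∀ j, Multiset.map (t j) Finset.univ.val = Sym.toMultiset (s j)).Nonempty :=
    ⟨fun j => Function.surjInv toSym_surjective (s j), Finset.mem_filter.2 ⟨Finset.mem_univ _,
      fun j => Sym.coe_inj.2 (Function.surjInv_eq toSym_surjective (s j))⟩⟩
  obtain ⟨t, ht, hinf⟩ :=
    Finset.exists_mem_eq_inf _ hne fun t => ∑ i : Fin m, vA R (fun j => t j i)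
  exact ⟨t, fun j => Sym.coe_inj.1 ((Finset.mem_filter.1 ht).2 j), by rw [lpPow, hinf]⟩

end LpPow

theorem stmt_4_general {σ : Type} [Fintype σ] (ar : σ → ℕ)
    {A B : Type} [Fintype A] [DecidableEq A] [Fintype B]
    (vA : ∀ R : σ, (Fin (ar R) → A) → WithTop ℚ)
    (vB : ∀ R : σ, (Fin (ar R) → B) → WithTop ℚ)
    (m : ℕ) :
    (∃ μ : (Sym A m → B) → ℚ, IsFracHom ar (lpPow ar m vA) vB μ) ↔
      ∃ ω : ((Fin m → A) → B) → ℚ,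
        IsFracPoly ar vA vB m ω ∧ ∀ f, 0 < ω f → IsSymmetricOp f := by
  constructor
  · rintro ⟨μ, hμ0, hμ1, hμ⟩
    refine ⟨pushWeight (· ∘ toSym) μ,
      ⟨pushWeight_nonneg hμ0, by rw [sum_pushWeight, hμ1], fun R a => ?_⟩, fun f hf => ?_⟩
    · rw [sum_pushWeight_mul hμ0]
      exact (hμ R _).trans (lpPow_toSym_le vA R fun j i => a i j)
    · obtain ⟨g, rfl⟩ := exists_eq_of_pushWeight_pos hf
      exact isSymmetricOp_comp_toSym g
  · rintro ⟨ω, ⟨hω0, hω1, hω⟩, hsym⟩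
    let L := Function.surjInv (toSym_surjective (A := A) (m := m))
    refine ⟨pushWeight (· ∘ L) ω, pushWeight_nonneg hω0, by rw [sum_pushWeight, hω1],
      fun R s => ?_⟩
    obtain ⟨t, hts, hs⟩ := exists_lpPow_eq vA R s
    have hsupport : ∀ f, (ω f : WithTop ℚ) * vB R (fun j => f (L (s j)))
        = (ω f : WithTop ℚ) * vB R (fun j => f (t j)) := fun f => by
      rcases (hω0 f).eq_or_lt with h0 | hpos
      · simp [← h0]
      · congr 2; funext j
        exact (hsym f hpos).apply_eq_of_toSym_eq
          ((Function.surjInv_eq _ (s j)).trans (hts j).symm)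
    calc ∑ g, (pushWeight (· ∘ L) ω g : WithTop ℚ) * vB R (fun j => g (s j))
        = ∑ f, (ω f : WithTop ℚ) * vB R (fun j => f (t j)) := by
          rw [sum_pushWeight_mul hω0]
          exact Finset.sum_congr rfl fun f _ => hsupport f
      _ ≤ _ := hω R fun i j => t j i
      _ = lpPow ar m vA R s := hs.symm

theorem stmt_4 {σ : Type} [Fintype σ] (ar : σ → ℕ) (har : ∀ R, 0 < ar R)
    {A B : Type} [Fintype A] [DecidableEq A] [Fintype B]
    (vA : ∀ R : σ, (Fin (ar R) → A) → WithTop ℚ)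
    (vB : ∀ R : σ, (Fin (ar R) → B) → WithTop ℚ)
    (m : ℕ) (hm : 1 ≤ m) :
    (∃ μ : (Sym A m → B) → ℚ, IsFracHom ar (lpPow ar m vA) vB μ) ↔
      ∃ ω : ((Fin m → A) → B) → ℚ,
        IsFracPoly ar vA vB m ω ∧ ∀ f, 0 < ω f → IsSymmetricOp f :=
  stmt_4_general ar vA vB m

end PVCSP
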